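/- arXiv:1012.1942 — 2 statements merged into one kernel-verified Lean document; each statement's English description precedes it below -/
import Mathlib

section
/- Let d ≥ 2 be a fixed integer and c₀ ≥ 1 a constant. There exists N such that for every n ≥ N the following holds: if G is a graph on n vertices in which every two distinct vertices are connected by at least 2^{10d}·c₀·log n internally vertex-disjoint paths of length exactly d, then rc_k(G) ≤ d for every integer k with 1 ≤ k ≤ c₀·log n. -/
/-!
Colour all pairs of vertices independently and uniformly with `d` colours. For fixed `u ≠ v`
the `m = ⌈2^(10d) L⌉` given paths (`L = c₀ log n`) have length `d ≥ 2`, hence are edge-disjoint,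
so they are rainbow independently, each with probability `d!/d^d ≥ 4^(-d)`. Fewer than `k` of
them are rainbow only if some `m - k + 1` are not, which has probability at most
`C(m, k - 1) (1 - d!/d^d)^(m-k+1) ≤ e^((10d+2)L) e^(-255dL) < e^(-2L) ≤ n^(-2)`.
A union bound over the pairs leaves a colouring in which every pair keeps `k` rainbow paths.
Probabilities are densities `Finset.dens` of sets of colourings `Sym2 V → Fin d`.
-/

open MeasureTheory Filter
open scoped ENNReal

noncomputable section

namespace RainbowFormal

/-- The random graph on `Fin n` determined by an indicator function on potential edges. -/
def graphOf {n : ℕ} (f : Sym2 (Fin n) → Bool) : SimpleGraph (Fin n) :=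
  SimpleGraph.fromEdgeSet {e | f e = true}

/-- The Erdős–Rényi measure: each potential edge appears independently with probability `p`. -/
def edgeMeasure (n : ℕ) (p : ℝ) : Measure (Sym2 (Fin n) → Bool) :=
  Measure.pi fun _ => (PMF.bernoulli (min (Real.toNNReal p) 1) (min_le_right _ _)).toMeasure

instance (n : ℕ) (p : ℝ) : IsProbabilityMeasure (edgeMeasure n p) := by
  unfold edgeMeasure; infer_instance

/-- A walk is a rainbow path (w.r.t. coloring `χ`) if it is a path whose edges get
pairwise distinct colors. -/
def IsRainbowPath {V : Type*} {G : SimpleGraph V} {u v : V} (χ : Sym2 V → ℕ)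
    (p : G.Walk u v) : Prop :=
  p.IsPath ∧ (p.edges.map χ).Nodup

/-- A family of walks between two fixed vertices is internally (vertex-)disjoint if the walks
are pairwise distinct and share no vertex except the two endpoints. -/
def InternallyDisjoint {V : Type*} {G : SimpleGraph V} {u v : V} {k : ℕ}
    (P : Fin k → G.Walk u v) : Prop :=
  ∀ i j, i ≠ j → P i ≠ P j ∧
    ∀ w, w ∈ (P i).support → w ∈ (P j).support → w = u ∨ w = v

/-- The coloring `χ` makes `G` rainbow-`k`-connected: any two distinct vertices are joined by
at least `k` internally vertex-disjoint rainbow paths. -/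
def RainbowKConnectedColoring {V : Type*} (G : SimpleGraph V) (k : ℕ)
    (χ : Sym2 V → ℕ) : Prop :=
  ∀ u v : V, u ≠ v → ∃ P : Fin k → G.Walk u v,
    (∀ i, IsRainbowPath χ (P i)) ∧ InternallyDisjoint P

/-- The rainbow-`k`-connectivity of `G`: the least number `m` of colors in a coloring making `G`
rainbow-`k`-connected, as an extended natural number (`⊤` if no such coloring exists). -/
def rc {V : Type*} (G : SimpleGraph V) (k : ℕ) : ℕ∞ :=
  sInf {t : ℕ∞ | ∃ m : ℕ, t = (m : ℕ∞) ∧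
    ∃ χ : Sym2 V → ℕ, (∀ e, χ e < m) ∧ RainbowKConnectedColoring G k χ}

/-- Every two distinct vertices of `G` are joined by at least `m` internally vertex-disjoint
paths of length exactly `d`. -/
def ManyDisjointPaths {V : Type*} (G : SimpleGraph V) (d m : ℕ) : Prop :=
  ∀ u v : V, u ≠ v → ∃ P : Fin m → G.Walk u v,
    (∀ i, (P i).IsPath ∧ (P i).length = d) ∧ InternallyDisjoint P

/-- The uniform measure on a set of `d` colors. -/
def colorMeasure (d : ℕ) (hd : d ≠ 0) : Measure (Fin d) :=
  haveI : NeZero d := ⟨hd⟩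
  (PMF.uniformOfFintype (Fin d)).toMeasure

/-- The joint distribution of an Erdős–Rényi random graph together with an independent
uniformly random `d`-coloring of all potential edges. -/
def jointMeasure (n : ℕ) (p : ℝ) (d : ℕ) (hd : d ≠ 0) :
    Measure (Sym2 (Fin n) → Bool × Fin d) :=
  Measure.pi fun _ =>
    ((PMF.bernoulli (min (Real.toNNReal p) 1) (min_le_right _ _)).toMeasure.prod
      (colorMeasure d hd))

/-- The binary entropy function (base-2 logarithm). -/
def binH (x : ℝ) : ℝ :=
  x * Real.logb 2 (1/x) + (1-x) * Real.logb 2 (1/(1-x))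

open Finset Function
open scoped Nat

section Density

variable {α β : Type*} [Fintype α] [DecidableEq α] [Fintype β]

theorem dens_filter_and_of_dependsOn {A B : (α → β) → Prop} [DecidablePred A] [DecidablePred B]
    {s t : Set α} (hA : DependsOn A s) (hB : DependsOn B t) (hst : Disjoint s t) :
    dens {f | A f ∧ B f} = dens {f | A f} * dens {f | B f} := by
  classical
  -- swapping the `t`-coordinates of two functions is an involution of `(α → β) × (α → β)`
  -- carrying `{A ∧ B} × univ` onto `{A} × {B}`
  let swap : (α → β) × (α → β) → (α → β) × (α → β) := fun fg =>
    (t.piecewise fg.2 fg.1, t.piecewise fg.1 fg.2)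
  have hA_swap (f g : α → β) : A (t.piecewise g f) = A f :=
    hA fun x hx => by simp [Set.piecewise, Set.disjoint_left.1 hst hx]
  have hB_swap (f g : α → β) : B (t.piecewise g f) = B g :=
    hB fun x hx => by simp [Set.piecewise, hx]
  have hswap (fg) : swap (swap fg) = fg := by
    ext x <;> by_cases hx : x ∈ t <;> simp [swap, Set.piecewise, hx]
  have hcard : #(({f | A f ∧ B f} : Finset (α → β)) ×ˢ (univ : Finset (α → β))) =
      #(({f | A f} : Finset (α → β)) ×ˢ ({f | B f} : Finset (α → β))) := by
    refine card_nbij' swap swap (fun fg hfg => ?_) (fun fg hfg => ?_)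
      (fun fg _ => hswap fg) (fun fg _ => hswap fg)
    all_goals
      simp only [mem_coe, mem_product, mem_filter, mem_univ, true_and, and_true, swap] at hfg ⊢
      rwa [hA_swap, hB_swap]
  rw [card_product, card_product, card_univ] at hcard
  rcases isEmpty_or_nonempty (α → β) with hempty | hne
  · simp [dens, Fintype.card_eq_zero]
  have hD : (Fintype.card (α → β) : ℚ≥0) ≠ 0 := by positivity
  simp only [dens, div_mul_div_comm, div_eq_div_iff hD (mul_ne_zero hD hD)]
  rw [← mul_assoc]
  exact_mod_cast congrArg (· * Fintype.card (α → β)) hcard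

theorem dens_filter_forall_mem_eq_prod [Nonempty β] {ι : Type*} [DecidableEq ι]
    {B : ι → (α → β) → Prop} [∀ i, DecidablePred (B i)] {s : ι → Set α}
    (hs : Pairwise (Disjoint on s)) (hB : ∀ i, DependsOn (B i) (s i)) (T : Finset ι) :
    dens {f | ∀ i ∈ T, B i f} = ∏ i ∈ T, dens {f | B i f} := by
  induction T using Finset.induction_on with
  | empty => simp
  | insert a T ha ih =>
    have hT : DependsOn (fun f => ∀ i ∈ T, B i f) (⋃ i ∈ T, s i) := fun f g hfg =>
      propext <| forall₂_congr fun i hi => by rw [hB i fun x hx => hfg x (Set.mem_biUnion hi hx)]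
    have hdisj : Disjoint (s a) (⋃ i ∈ T, s i) :=
      Set.disjoint_iUnion₂_right.2 fun i hi => hs (ne_of_mem_of_not_mem hi ha).symm
    rw [prod_insert ha, ← ih, ← dens_filter_and_of_dependsOn (hB a) hT hdisj]
    simp only [forall_mem_insert]

theorem dens_filter_le_card_le_choose_mul_pow [Nonempty β] [DecidableEq β] {ι : Type*}
    [Fintype ι] [DecidableEq ι] {B : ι → (α → β) → Prop} [∀ i, DecidablePred (B i)] {s : ι → Set α}
    (hs : Pairwise (Disjoint on s)) (hB : ∀ i, DependsOn (B i) (s i)) {q : ℚ≥0}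
    (hq : ∀ i, dens {f | B i f} ≤ q) (r : ℕ) :
    dens {f | r ≤ #{i | B i f}} ≤ (Fintype.card ι).choose r * q ^ r := by
  calc dens {f | r ≤ #{i | B i f}}
      ≤ dens ((powersetCard r univ).biUnion fun T => {f | ∀ i ∈ T, B i f}) := by
        refine dens_le_dens fun f hf => ?_
        obtain ⟨T, hT, hTcard⟩ := exists_subset_card_eq (mem_filter.1 hf).2
        exact mem_biUnion.2 ⟨T, mem_powersetCard.2 ⟨subset_univ T, hTcard⟩,
          mem_filter.2 ⟨mem_univ f, fun i hi => (mem_filter.1 (hT hi)).2⟩⟩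
    _ ≤ ∑ T ∈ powersetCard r univ, dens {f | ∀ i ∈ T, B i f} := dens_biUnion_le
    _ ≤ ∑ T ∈ powersetCard r (univ : Finset ι), q ^ r := by
        refine sum_le_sum fun T hT => ?_
        rw [← (mem_powersetCard.1 hT).2]
        convert (dens_filter_forall_mem_eq_prod hs hB T).le.trans
          (prod_le_pow_card T _ q fun i _ => hq i)
    _ = (Fintype.card ι).choose r * q ^ r := by
        rw [sum_const, card_powersetCard, card_univ, nsmul_eq_mul]

theorem factorial_mul_pow_le_card_filter_nodup_map [DecidableEq β] {l : List α} (hl : l.Nodup)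
    (hlen : l.length = Fintype.card β) :
    (Fintype.card β)! * Fintype.card β ^ (Fintype.card α - l.length) ≤
      #{f : α → β | (l.map f).Nodup} := by
  let s := l.toFinset
  have hs : #s = l.length := List.toFinset_card_of_nodup hl
  let F : (s ↪ β) × ({x // x ∉ s} → β) → α → β := fun eg x =>
    if hx : x ∈ s then eg.1 ⟨x, hx⟩ else eg.2 ⟨x, hx⟩
  have hF_nodup (eg) : (l.map (F eg)).Nodup := by
    refine hl.map_on fun x hx y hy hxy => ?_
    have hx : x ∈ s := List.mem_toFinset.2 hx
    have hy : y ∈ s := List.mem_toFinset.2 hy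
    simpa [F, hx, hy] using hxy
  have hF_inj : Injective F := by
    rintro ⟨e, g⟩ ⟨e', g'⟩ h
    refine Prod.ext (DFunLike.ext _ _ fun x => ?_) (funext fun x => ?_)
    · simpa [F, x.2] using congrFun h x
    · simpa [F, x.2] using congrFun h x
  calc (Fintype.card β)! * Fintype.card β ^ (Fintype.card α - l.length)
      = #(univ : Finset ((s ↪ β) × ({x // x ∉ s} → β))) := by
        rw [card_univ, Fintype.card_prod, Fintype.card_embedding_eq, Fintype.card_fun,
          Fintype.card_subtype_compl, Fintype.card_coe, hs, hlen, Nat.descFactorial_self]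
    _ ≤ #{f : α → β | (l.map f).Nodup} :=
        card_le_card_of_injOn F (fun eg _ => by simpa using hF_nodup eg) hF_inj.injOn

theorem factorial_div_pow_le_dens_filter_nodup_map [Nonempty β] [DecidableEq β] {l : List α}
    (hl : l.Nodup) (hlen : l.length = Fintype.card β) :
    ((Fintype.card β)! / Fintype.card β ^ Fintype.card β : ℚ≥0) ≤
      dens {f : α → β | (l.map f).Nodup} := by
  have hle : Fintype.card β ≤ Fintype.card α := hlen ▸ hl.length_le_card
  have hcard := factorial_mul_pow_le_card_filter_nodup_map hl hlen
  rw [hlen] at hcard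
  rw [dens, Fintype.card_fun, Nat.cast_pow, div_le_div_iff₀ (by positivity) (by positivity)]
  calc ((Fintype.card β)! : ℚ≥0) * Fintype.card β ^ Fintype.card α
      = ((Fintype.card β)! * Fintype.card β ^ (Fintype.card α - Fintype.card β) : ℕ) *
          Fintype.card β ^ Fintype.card β := by
        push_cast
        rw [mul_assoc, ← pow_add, Nat.sub_add_cancel hle]
    _ ≤ #{f : α → β | (l.map f).Nodup} * Fintype.card β ^ Fintype.card β := by
        gcongr

theorem exists_forall_notMem_of_sum_dens_lt_one {ι X : Type*} [Fintype X] [Nonempty X]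
    [DecidableEq X] (s : Finset ι) (S : ι → Finset X) (h : ∑ i ∈ s, ((S i).dens : ℝ) < 1) :
    ∃ x, ∀ i ∈ s, x ∉ S i := by
  by_contra! hcover
  have hbound := (NNRat.cast_le (K := ℝ)).2 (dens_biUnion_le (s := s) (t := S))
  rw [eq_univ_of_forall fun x => mem_biUnion.2 (hcover x), dens_univ, NNRat.cast_one,
    NNRat.cast_sum] at hbound
  linarith

end Density

section Estimates

open Real

theorem factorial_div_pow_self_le_one {K : Type*} [Semifield K] [LinearOrder K]
    [IsStrictOrderedRing K] (d : ℕ) : (d ! / d ^ d : K) ≤ 1 :=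
  div_le_one_of_le₀ (by exact_mod_cast d.factorial_le_pow) (by positivity)

theorem natCast_le_exp_logb_two (n : ℕ) : (n : ℝ) ≤ exp (logb 2 n) := by
  rcases n.eq_zero_or_pos with rfl | hn
  · simp
  have hlog : 0 ≤ log n := log_nonneg (by exact_mod_cast hn)
  calc (n : ℝ) = exp (log n) := (exp_log (by positivity)).symm
    _ ≤ exp (logb 2 n) :=
        exp_le_exp.2 (le_div_self hlog (log_pos one_lt_two) (log_two_lt_d9.le.trans (by norm_num)))

theorem two_pow_le_exp (b : ℕ) : (2 : ℝ) ^ b ≤ exp b := by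
  rw [← exp_one_pow]
  gcongr
  linarith [add_one_le_exp 1]

theorem choose_le_exp {m t b : ℕ} {L : ℝ} (hL : 0 ≤ L) (ht : (t : ℝ) ≤ L)
    (hm : (m : ℝ) ≤ 2 ^ b * L) : (m.choose t : ℝ) ≤ exp ((b + 1) * L) := by
  calc (m.choose t : ℝ) ≤ m ^ t / t ! := Nat.choose_le_pow_div t m
    _ ≤ (2 ^ b * L) ^ t / t ! := by gcongr
    _ = ((2 : ℝ) ^ b) ^ t * (L ^ t / t !) := by ring
    _ ≤ exp b ^ t * exp L := by gcongr; exacts [two_pow_le_exp b, pow_div_factorial_le_exp _ hL t]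
    _ = exp (b * t + L) := by rw [← exp_nat_mul, ← exp_add, mul_comm]
    _ ≤ exp ((b + 1) * L) := exp_le_exp.2 (by nlinarith)

theorem inv_four_pow_le_factorial_div_pow_self (d : ℕ) : ((4 : ℝ) ^ d)⁻¹ ≤ d ! / d ^ d := by
  have hpos : (0 : ℝ) < d ^ d / d ! := by
    have : (0 : ℝ) < d ^ d := by exact_mod_cast Nat.pow_self_pos
    positivity
  rw [← inv_div]
  refine inv_anti₀ hpos ?_
  calc (d : ℝ) ^ d / d ! ≤ exp d := pow_div_factorial_le_exp _ d.cast_nonneg d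
    _ = exp 1 ^ d := (exp_one_pow d).symm
    _ ≤ 4 ^ d := by gcongr; linarith [exp_one_lt_d9]

theorem one_sub_factorial_div_pow_self_pow_le {d : ℕ} {L : ℝ} (hL : 0 ≤ L) (s : ℕ)
    (hs : (2 ^ (10 * d) - 1) * L ≤ s) :
    (1 - d ! / d ^ d : ℝ) ^ s ≤ exp (-(255 * d * L)) := by
  set x : ℝ := d ! / d ^ d
  have hx : ((4 : ℝ) ^ d)⁻¹ ≤ x := inv_four_pow_le_factorial_div_pow_self d
  have h256 : 1 + d * 255 ≤ (256 : ℝ) ^ d :=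
    calc 1 + d * 255 ≤ (1 + 255 : ℝ) ^ d := one_add_mul_le_pow (by norm_num) d
      _ = 256 ^ d := by norm_num
  have h4 : (2 : ℝ) ^ (10 * d) = 256 ^ d * 4 ^ d := by
    rw [pow_mul, ← mul_pow]; norm_num
  have hsx : 255 * d * L ≤ s * x := by
    have h1 : (1 : ℝ) ≤ 4 ^ d := one_le_pow₀ (by norm_num)
    have h2 : 255 * d * L * 4 ^ d ≤ s :=
      calc 255 * d * L * 4 ^ d ≤ (256 ^ d - 1) * (L * 4 ^ d) := by
            rw [mul_assoc]; gcongr; linarith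
        _ = (2 ^ (10 * d) - 4 ^ d) * L := by rw [h4]; ring
        _ ≤ (2 ^ (10 * d) - 1) * L := by gcongr
        _ ≤ s := hs
    calc 255 * d * L = 255 * d * L * 4 ^ d * (4 ^ d)⁻¹ := by field_simp
      _ ≤ s * x := by gcongr
  calc (1 - x) ^ s ≤ exp (-x) ^ s := by
        gcongr
        · exact sub_nonneg.2 (factorial_div_pow_self_le_one d)
        · exact one_sub_le_exp_neg x
    _ = exp (-(s * x)) := by rw [← exp_nat_mul]; ring_nf
    _ ≤ exp (-(255 * d * L)) := exp_le_exp.2 (by linarith)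

theorem le_ceil_two_pow_mul {k b : ℕ} {L : ℝ} (hkL : (k : ℝ) ≤ L) : k ≤ ⌈2 ^ b * L⌉₊ := by
  have hL : 0 ≤ L := k.cast_nonneg.trans hkL
  exact_mod_cast hkL.trans ((le_mul_of_one_le_left hL (one_le_pow₀ one_le_two)).trans
    (Nat.le_ceil _))

theorem sq_mul_choose_mul_pow_lt_one {d k m n : ℕ} {c₀ : ℝ} (hd : 1 ≤ d) (hc₀ : 1 ≤ c₀)
    (hk : 1 ≤ k) (hkL : (k : ℝ) ≤ c₀ * logb 2 n)
    (hm : m = ⌈(2 : ℝ) ^ (10 * d) * c₀ * logb 2 n⌉₊) :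
    (n : ℝ) ^ 2 * m.choose (m - k + 1) * (1 - d ! / d ^ d) ^ (m - k + 1) < 1 := by
  set L := c₀ * logb 2 n
  have hL : 1 ≤ L := le_trans (by exact_mod_cast hk) hkL
  have hlog₀ : 0 ≤ logb 2 n := by by_contra! h; nlinarith
  have hlog : logb 2 n ≤ L := le_mul_of_one_le_left hlog₀ hc₀
  have hm₁ : 2 ^ (10 * d) * L ≤ m := by rw [hm, ← mul_assoc]; exact Nat.le_ceil _
  have hm₂ : (m : ℝ) ≤ 2 ^ (10 * d + 1) * L := by
    have := Nat.ceil_lt_add_one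
      (mul_nonneg (by positivity) (by linarith) : 0 ≤ (2 : ℝ) ^ (10 * d) * L)
    rw [← mul_assoc, ← hm] at this
    have hpow : (1 : ℝ) ≤ 2 ^ (10 * d) := one_le_pow₀ one_le_two
    rw [pow_succ]; nlinarith
  have hkm : k ≤ m := by rw [hm, mul_assoc]; exact le_ceil_two_pow_mul hkL
  have hchoose : m.choose (m - k + 1) = m.choose (k - 1) := Nat.choose_symm_of_eq_add (by omega)
  have hnonrainbow : (2 ^ (10 * d) - 1) * L ≤ ((m - k + 1 : ℕ) : ℝ) := by
    rw [Nat.cast_add, Nat.cast_sub hkm]; push_cast; nlinarith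
  calc (n : ℝ) ^ 2 * m.choose (m - k + 1) * (1 - d ! / d ^ d) ^ (m - k + 1)
      ≤ exp (2 * L) * exp ((10 * d + 1 + 1) * L) * exp (-(255 * d * L)) := by
        gcongr ?_ * ?_ * ?_
        · exact pow_nonneg (sub_nonneg.2 (factorial_div_pow_self_le_one d)) _
        · calc (n : ℝ) ^ 2 ≤ exp (logb 2 n) ^ 2 := by gcongr; exact natCast_le_exp_logb_two n
            _ = exp (2 * logb 2 n) := by rw [← exp_nat_mul]; norm_num
            _ ≤ exp (2 * L) := by gcongr
        · rw [hchoose]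
          have := choose_le_exp (m := m) (b := 10 * d + 1) (by linarith)
            ((Nat.cast_le.2 (Nat.sub_le k 1)).trans hkL) hm₂
          exact_mod_cast this
        · exact one_sub_factorial_div_pow_self_pow_le (by linarith) _ hnonrainbow
    _ = exp ((4 + 10 * d - 255 * d) * L) := by rw [← exp_add, ← exp_add]; ring_nf
    _ < 1 := exp_lt_one_iff.2 (by nlinarith [(by exact_mod_cast hd : (1 : ℝ) ≤ d)])

end Estimates

section Paths

variable {V : Type*} {G : SimpleGraph V} {u v : V}

theorem InternallyDisjoint.comp_injective {k m : ℕ} {P : Fin m → G.Walk u v}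
    (hP : InternallyDisjoint P) {f : Fin k → Fin m} (hf : Injective f) :
    InternallyDisjoint (P ∘ f) :=
  fun i j hij => hP (f i) (f j) (hf.ne hij)

theorem InternallyDisjoint.pairwise_disjoint_edges {m : ℕ} {P : Fin m → G.Walk u v}
    (hP : InternallyDisjoint P) (hpath : ∀ i, (P i).IsPath) (hlen : ∀ i, (P i).length ≠ 1) :
    Pairwise (Disjoint on fun i => {e | e ∈ (P i).edges}) := by
  intro i j hij
  refine Set.disjoint_left.2 fun e hei hej => ?_
  induction e using Sym2.ind with | h a b => ?_
  have ha := (hP i j hij).2 a ((P i).fst_mem_support_of_mem_edges hei)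
    ((P j).fst_mem_support_of_mem_edges hej)
  have hb := (hP i j hij).2 b ((P i).snd_mem_support_of_mem_edges hei)
    ((P j).snd_mem_support_of_mem_edges hej)
  have hab : a ≠ b := G.ne_of_adj ((P i).adj_of_mem_edges hei)
  have huv : s(a, b) = s(u, v) := by
    rcases ha with rfl | rfl <;> rcases hb with rfl | rfl <;> simp_all [Sym2.eq_swap]
  exact hlen i ((hpath i).length_eq_one_of_mem_edges (huv ▸ hei))

theorem rc_le_of_rainbowKConnectedColoring {k d : ℕ} (χ : Sym2 V → Fin d)
    (hχ : RainbowKConnectedColoring G k fun e => χ e) : rc G k ≤ d :=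
  sInf_le ⟨d, rfl, _, fun e => (χ e).isLt, hχ⟩

theorem rainbowKConnectedColoring_of_le_card_filter {k d : ℕ} {χ : Sym2 V → Fin d}
    (h : ∀ u v : V, u ≠ v → ∃ m, ∃ P : Fin m → G.Walk u v, (∀ i, (P i).IsPath) ∧
      InternallyDisjoint P ∧ k ≤ #{i | ((P i).edges.map χ).Nodup}) :
    RainbowKConnectedColoring G k fun e => χ e := by
  intro u v huv
  obtain ⟨m, P, hpath, hdisj, hk⟩ := h u v huv
  obtain ⟨T, hT, hTcard⟩ := exists_subset_card_eq hk
  let f := T.orderEmbOfFin hTcard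
  refine ⟨P ∘ f, fun i => ⟨hpath (f i), ?_⟩, hdisj.comp_injective f.injective⟩
  change (List.map (Fin.val ∘ χ) _).Nodup
  rw [← List.map_map]
  exact ((mem_filter.1 (hT (T.orderEmbOfFin_mem hTcard i))).2).map Fin.val_injective

theorem dens_filter_le_card_not_nodup_le_choose_mul_pow [Fintype V] [DecidableEq V] {d m : ℕ}
    [NeZero d] (hd : d ≠ 1) {P : Fin m → G.Walk u v} (hpath : ∀ i, (P i).IsPath)
    (hlen : ∀ i, (P i).length = d) (hdisj : InternallyDisjoint P) (r : ℕ) :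
    (dens {χ : Sym2 V → Fin d | r ≤ #{i | ¬((P i).edges.map χ).Nodup}} : ℝ) ≤
      m.choose r * (1 - d ! / d ^ d) ^ r := by
  have hrainbow (i) :
      (d ! / d ^ d : ℚ≥0) ≤ dens {χ : Sym2 V → Fin d | ((P i).edges.map χ).Nodup} := by
    simpa using factorial_div_pow_le_dens_filter_nodup_map (β := Fin d)
      (hpath i).isTrail.edges_nodup
      (by rw [SimpleGraph.Walk.length_edges, hlen i, Fintype.card_fin])
  have hnot (i) :
      dens {χ : Sym2 V → Fin d | ¬((P i).edges.map χ).Nodup} ≤ 1 - d ! / d ^ d := by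
    have := dens_filter_add_dens_filter_not_eq_dens (s := univ)
      fun χ : Sym2 V → Fin d => ((P i).edges.map χ).Nodup
    rw [dens_univ] at this
    exact le_tsub_of_add_le_left (this ▸ by gcongr; exact hrainbow i)
  have hbound := dens_filter_le_card_le_choose_mul_pow
    (hdisj.pairwise_disjoint_edges hpath fun i => (hlen i).trans_ne hd)
    (fun i χ χ' h => by simp only [List.map_congr_left h]) hnot r
  have hcast : ((1 - d ! / d ^ d : ℚ≥0) : ℝ) = 1 - d ! / d ^ d := by
    have h := congrArg (fun x : ℚ≥0 => (x : ℝ))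
      (tsub_add_cancel_of_le (factorial_div_pow_self_le_one (K := ℚ≥0) d))
    push_cast at h
    linarith
  rw [Fintype.card_fin] at hbound
  calc (dens {χ : Sym2 V → Fin d | r ≤ #{i | ¬((P i).edges.map χ).Nodup}} : ℝ)
      ≤ ((m.choose r * (1 - d ! / d ^ d) ^ r : ℚ≥0) : ℝ) := NNRat.cast_le.2 hbound
    _ = m.choose r * (1 - d ! / d ^ d) ^ r := by
        rw [NNRat.cast_mul, NNRat.cast_pow, hcast, NNRat.cast_natCast]

theorem rc_le_of_manyDisjointPaths [Fintype V] [DecidableEq V] {d m k : ℕ} (hd : 2 ≤ d)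
    (hkm : k ≤ m) (hG : ManyDisjointPaths G d m)
    (hlt : (Fintype.card V : ℝ) ^ 2 * m.choose (m - k + 1) * (1 - d ! / d ^ d) ^ (m - k + 1) < 1) :
    rc G k ≤ d := by
  have : NeZero d := ⟨by omega⟩
  choose P hP hPdisj using hG
  have hpairs : (Fintype.card {p : V × V // p.1 ≠ p.2} : ℝ) ≤ Fintype.card V ^ 2 := by
    exact_mod_cast (Fintype.card_subtype_le _).trans_eq (by simp [sq])
  obtain ⟨χ, hχ⟩ := exists_forall_notMem_of_sum_dens_lt_one
    (univ : Finset {p : V × V // p.1 ≠ p.2}) (fun p =>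
      {χ : Sym2 V → Fin d | m - k + 1 ≤ #{i | ¬((P _ _ p.2 i).edges.map χ).Nodup}}) <|
    calc _ ≤ ∑ _p : {p : V × V // p.1 ≠ p.2},
            (m.choose (m - k + 1) * (1 - d ! / d ^ d) ^ (m - k + 1) : ℝ) :=
          sum_le_sum fun p _ => dens_filter_le_card_not_nodup_le_choose_mul_pow (by omega)
            (fun i => (hP _ _ p.2 i).1) (fun i => (hP _ _ p.2 i).2) (hPdisj _ _ p.2) _
      _ ≤ Fintype.card V ^ 2 * m.choose (m - k + 1) * (1 - d ! / d ^ d) ^ (m - k + 1) := by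
          rw [sum_const, card_univ, nsmul_eq_mul, ← mul_assoc]
          gcongr
          exact pow_nonneg (sub_nonneg.2 (factorial_div_pow_self_le_one d)) _
      _ < 1 := hlt
  refine rc_le_of_rainbowKConnectedColoring χ <| rainbowKConnectedColoring_of_le_card_filter
    fun u v huv => ⟨m, P u v huv, fun i => (hP u v huv i).1, hPdisj u v huv, ?_⟩
  have hgood := hχ ⟨(u, v), huv⟩ (mem_univ _)
  simp only [mem_filter, mem_univ, true_and, not_le] at hgood
  have := card_filter_add_card_filter_not (s := univ)
    fun i => ((P u v huv i).edges.map χ).Nodup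
  rw [card_univ, Fintype.card_fin] at this
  omega

end Paths

/-- For fixed `d ≥ 2` and `c₀ ≥ 1`, for all sufficiently large `n`: any graph
on `n` vertices in which every two distinct vertices are joined by at least
`2^(10d) · c₀ · log n` internally vertex-disjoint paths of length exactly `d` satisfies
`rc_k(G) ≤ d` for every `1 ≤ k ≤ c₀ log n`. -/
theorem rc_le_of_many_disjoint_paths
    (d : ℕ) (hd : 2 ≤ d) (c₀ : ℝ) (hc₀ : 1 ≤ c₀) :
    ∃ N : ℕ, ∀ n : ℕ, N ≤ n →
      ∀ G : SimpleGraph (Fin n),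
        ManyDisjointPaths G d ⌈(2:ℝ) ^ (10 * d) * c₀ * Real.logb 2 n⌉₊ →
        ∀ k : ℕ, 1 ≤ k → (k : ℝ) ≤ c₀ * Real.logb 2 n →
          rc G k ≤ (d : ℕ∞) := by
  refine ⟨0, fun n _ G hG k hk hkL => rc_le_of_manyDisjointPaths hd ?_ hG ?_⟩
  · rw [mul_assoc]
    exact le_ceil_two_pow_mul hkL
  · rw [Fintype.card_fin]
    exact sq_mul_choose_mul_pow_lt_one (by omega) hc₀ hk hkL rfl

end RainbowFormal
end
end

section
/- For every connected graph G on n ≥ 2 vertices, rc₁(G) ≤ n − 1; moreover, rc₁(G) = n − 1 if and only if G is a tree. -/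
open MeasureTheory Filter
open scoped ENNReal

noncomputable section

/-!
A spanning tree `T` coloured injectively shows `rc₁(G) ≤ n - 1`, since every tree path is rainbow.
A tree needs `n - 1` colours: any two of its edges are bridges separating some pair of vertices,
so both lie on every path between that pair. If `G` is not a tree, pick an edge `xy ∉ T`; the
`T`-path from `x` to `y` starts `x, w, z, …`. Deleting `xw` and `wz` splits `T` into the parts
of `x`, `w` and `z` (the last containing `y`), and any two of these are joined by one of the
edges `xw`, `wz`, `xy`. So these three edges may share a colour while the other `n - 3` tree
edges get distinct ones: `n - 2` colours suffice.
-/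

open SimpleGraph Set

lemma Finset.exists_injOn_lt_card {α : Type*} (s : Finset α) (hs : s.Nonempty) :
    ∃ f : α → ℕ, InjOn f s ∧ ∀ a, f a < s.card := by
  classical
  refine ⟨fun a => if h : a ∈ s then s.equivFin ⟨a, h⟩ else 0, fun a ha b hb hab => ?_,
    fun a => ?_⟩
  · simpa [Finset.mem_coe.mp ha, Finset.mem_coe.mp hb, Fin.val_inj] using hab
  · dsimp only
    split
    · exact Fin.isLt _
    · exact hs.card_pos

lemma Set.InjOn.insert_of_eqOn {α β : Type*} {f g : α → β} {s : Set α} {a b : α}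
    (hf : InjOn f (insert b s)) (hb : b ∉ s) (hgf : EqOn g f s) (hab : g a = f b) :
    InjOn g (insert a s) := by
  have hfb : f b ∉ f '' s := ((injOn_insert hb).mp hf).2
  have ha : a ∉ s := fun ha => hfb ⟨a, ha, (hgf ha).symm.trans hab⟩
  refine (injOn_insert ha).mpr ⟨(hf.mono (subset_insert b s)).congr hgf.symm, ?_⟩
  rwa [hab, hgf.image_eq]

lemma Finset.exists_lt_card_injOn_insert_sdiff {α : Type*} (s : Finset α) {c : α} (hc : c ∈ s)
    (M : Set α) (hM : Disjoint M (↑s \ {c})) :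
    ∃ f : α → ℕ, (∀ a, f a < s.card) ∧ ∀ e ∈ M, InjOn f (insert e (↑s \ {c})) := by
  classical
  obtain ⟨f, hf, hlt⟩ := s.exists_injOn_lt_card ⟨c, hc⟩
  refine ⟨fun a => if a ∈ M then f c else f a, fun a => ?_, fun e he => ?_⟩
  · dsimp only
    split <;> exact hlt _
  · exact (hf.mono (Set.insert_subset hc Set.sdiff_subset)).insert_of_eqOn (fun h => h.2 rfl)
      (fun a ha => if_neg (Set.disjoint_right.mp hM ha)) (if_pos he)

namespace SimpleGraph

variable {V : Type*} {G : SimpleGraph V}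

lemma Reachable.deleteEdges_or_exists {u v : V} (h : G.Reachable u v) (s : Set (Sym2 V)) :
    (G.deleteEdges s).Reachable u v ∨ ∃ a b, s(a, b) ∈ s ∧ (G.deleteEdges s).Reachable u a := by
  refine or_iff_not_imp_left.mpr fun hv => ?_
  obtain ⟨p⟩ := h
  obtain ⟨d, -, hd, hd'⟩ := p.exists_boundary_dart {a | (G.deleteEdges s).Reachable u a} .rfl hv
  refine ⟨d.fst, d.snd, by_contra fun hs => hd' ?_, hd⟩
  exact hd.trans (deleteEdges_adj.mpr ⟨d.adj, hs⟩).reachable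

lemma Connected.reachable_deleteEdges_pair (hG : G.Connected) (x w z u : V) :
    (G.deleteEdges {s(x, w), s(w, z)}).Reachable u x ∨
      (G.deleteEdges {s(x, w), s(w, z)}).Reachable u w ∨
        (G.deleteEdges {s(x, w), s(w, z)}).Reachable u z := by
  rcases Reachable.deleteEdges_or_exists (hG.preconnected u w) {s(x, w), s(w, z)} with
    h | ⟨a, b, hab, h⟩
  · exact .inr (.inl h)
  · simp only [mem_insert_iff, mem_singleton_iff, Sym2.eq_iff] at hab
    rcases hab with (⟨rfl, rfl⟩ | ⟨rfl, rfl⟩) | (⟨rfl, rfl⟩ | ⟨rfl, rfl⟩) <;> simp [h]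

lemma reachable_or_of_forall_reachable_or {D H₁ H₂ H₃ : SimpleGraph V} {a b c : V}
    (h₁ : D ≤ H₁) (h₂ : D ≤ H₂) (h₃ : D ≤ H₃)
    (hab : H₁.Reachable a b) (hbc : H₂.Reachable b c) (hca : H₃.Reachable c a)
    (hD : ∀ u, D.Reachable u a ∨ D.Reachable u b ∨ D.Reachable u c) (u v : V) :
    H₁.Reachable u v ∨ H₂.Reachable u v ∨ H₃.Reachable u v := by
  have via : ∀ {H}, D ≤ H → ∀ {p q}, D.Reachable u p → D.Reachable v q → H.Reachable p q →
      H.Reachable u v :=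
    fun hH _ _ hp hq hpq => (hp.mono hH).trans (hpq.trans (hq.mono hH).symm)
  rcases hD u with hu | hu | hu <;> rcases hD v with hv | hv | hv
  · exact .inl (via h₁ hu hv .rfl)
  · exact .inl (via h₁ hu hv hab)
  · exact .inr (.inr (via h₃ hu hv hca.symm))
  · exact .inl (via h₁ hu hv hab.symm)
  · exact .inl (via h₁ hu hv .rfl)
  · exact .inr (.inl (via h₂ hu hv hbc))
  · exact .inr (.inr (via h₃ hu hv hca))
  · exact .inr (.inl (via h₂ hu hv hbc.symm))
  · exact .inl (via h₁ hu hv .rfl)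

lemma Reachable.exists_adj_adj_reachable_deleteEdges {x y : V} (h : G.Reachable x y)
    (hxy : x ≠ y) (hn : ¬G.Adj x y) :
    ∃ w z, G.Adj x w ∧ G.Adj w z ∧ x ≠ z ∧ (G.deleteEdges {s(x, w), s(w, z)}).Reachable z y := by
  obtain ⟨p, hp⟩ := h.exists_isPath
  cases p with
  | nil => exact absurd rfl hxy
  | cons hxw q =>
    cases q with
    | nil => exact absurd hxw hn
    | cons hwz r =>
      obtain ⟨⟨-, hw⟩, hx⟩ :=
        Walk.cons_isPath_iff _ _ |>.mp hp |>.imp_left (Walk.cons_isPath_iff _ _).mp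
      refine ⟨_, _, hxw, hwz, fun hxz => hx (by simp [hxz]), ⟨r.toDeleteEdges _ ?_⟩⟩
      simp only [mem_insert_iff, mem_singleton_iff]
      rintro e he (rfl | rfl)
      · exact hw (r.snd_mem_support_of_mem_edges he)
      · exact hw (r.fst_mem_support_of_mem_edges he)

lemma exists_not_reachable_deleteEdges_of_isBridge {a b c d : V} (hab : G.IsBridge s(a, b))
    (hcd : G.IsBridge s(c, d)) (hcd' : G.Adj c d) (hne : s(a, b) ≠ s(c, d)) :
    ∃ u v, ¬(G.deleteEdges {s(a, b)}).Reachable u v ∧ ¬(G.deleteEdges {s(c, d)}).Reachable u v := by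
  have hcd₁ : (G.deleteEdges {s(a, b)}).Reachable c d :=
    (deleteEdges_adj.mpr ⟨hcd', fun h => hne (mem_singleton_iff.mp h).symm⟩).reachable
  obtain ⟨u, hu⟩ : ∃ u, ¬(G.deleteEdges {s(a, b)}).Reachable u c := by
    by_cases hac : (G.deleteEdges {s(a, b)}).Reachable a c
    · exact ⟨b, fun hbc => (isBridge_iff.mp hab) (hac.trans hbc.symm)⟩
    · exact ⟨a, hac⟩
  have hu' : ¬(G.deleteEdges {s(a, b)}).Reachable u d := fun h => hu (h.trans hcd₁.symm)
  by_cases huc : (G.deleteEdges {s(c, d)}).Reachable u c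
  · exact ⟨u, d, hu', fun hud => (isBridge_iff.mp hcd) (huc.symm.trans hud)⟩
  · exact ⟨u, c, hu, huc⟩

end SimpleGraph

namespace RainbowFormal

section

variable {V : Type*} {G : SimpleGraph V} {χ : Sym2 V → ℕ}

lemma rc_le_of_forall_lt {k m : ℕ} (hχ : ∀ e, χ e < m) (h : RainbowKConnectedColoring G k χ) :
    rc G k ≤ m :=
  sInf_le ⟨m, rfl, χ, hχ, h⟩

lemma rainbowKConnectedColoring_one_of_forall_exists_injOn
    (h : ∀ u v, ∃ H ≤ G, InjOn χ H.edgeSet ∧ H.Reachable u v) :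
    RainbowKConnectedColoring G 1 χ := by
  intro u v _
  obtain ⟨H, hHG, hχ, hr⟩ := h u v
  obtain ⟨p, hp⟩ := hr.exists_isPath
  have hsub : ∀ e ∈ p.edges, e ∈ H.edgeSet := fun _ he => p.edges_subset_edgeSet he
  refine ⟨fun _ => p.mapLe hHG, fun _ => ⟨hp.mapLe hHG, ?_⟩, fun i j hij => ?_⟩
  · rw [Walk.edges_mapLe_eq_edges]
    exact hp.edges_nodup.map_on fun e he e' he' => hχ (hsub e he) (hsub e' he')
  · exact absurd (Subsingleton.elim i j) hij

/-- Any two edges of an acyclic graph are bridges separating a common pair of vertices, hence both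
lie on every path between that pair. -/
lemma RainbowKConnectedColoring.injOn_edgeSet (hG : G.IsAcyclic)
    (h : RainbowKConnectedColoring G 1 χ) : InjOn χ G.edgeSet := by
  intro e₁ he₁ e₂ he₂ hχ
  induction e₁ using Sym2.ind with | _ a b => ?_
  induction e₂ using Sym2.ind with | _ c d => ?_
  by_contra hne
  obtain ⟨u, v, hu, hv⟩ := exists_not_reachable_deleteEdges_of_isBridge
    (isAcyclic_iff_forall_isBridge.mp hG he₁) (isAcyclic_iff_forall_isBridge.mp hG he₂) he₂ hne
  obtain ⟨P, hP, -⟩ := h u v fun huv => hu (huv ▸ .rfl)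
  have mem_edges : ∀ {x y}, ¬(G.deleteEdges {s(x, y)}).Reachable u v → s(x, y) ∈ (P 0).edges :=
    fun hxy => by_contra fun h => hxy (reachable_deleteEdges_iff_exists_walk.mpr ⟨P 0, h⟩)
  exact hne (List.inj_on_of_nodup_map (hP 0).2 (mem_edges hu) (mem_edges hv) hχ)

lemma rainbowKConnectedColoring_one_of_three_edges {D : SimpleGraph V} (hDG : D ≤ G)
    {x w z y : V} (hxw : G.Adj x w) (hwz : G.Adj w z) (hxy : G.Adj x y) (hzy : D.Reachable z y)
    (hD : ∀ u, D.Reachable u x ∨ D.Reachable u w ∨ D.Reachable u z)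
    (hχ : ∀ e ∈ ({s(x, w), s(w, z), s(x, y)} : Set (Sym2 V)), InjOn χ (insert e D.edgeSet)) :
    RainbowKConnectedColoring G 1 χ := by
  refine rainbowKConnectedColoring_one_of_forall_exists_injOn fun u v => ?_
  have hH : ∀ {a b}, G.Adj a b → s(a, b) ∈ ({s(x, w), s(w, z), s(x, y)} : Set _) →
      (D ⊔ edge a b).Reachable u v → ∃ H ≤ G, InjOn χ H.edgeSet ∧ H.Reachable u v := by
    intro a b hab habM huv
    refine ⟨_, sup_le hDG ((edge_le_iff _).mpr (.inr hab)), (hχ _ habM).mono ?_, huv⟩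
    rw [edgeSet_sup]
    exact (union_subset_union_right _ edgeSet_edge_subset).trans union_singleton.subset
  have hadj : ∀ {a b}, G.Adj a b → (D ⊔ edge a b).Reachable a b := fun hab =>
    Adj.reachable (Or.inr ((edge_adj ..).mpr ⟨.inl ⟨rfl, rfl⟩, hab.ne⟩))
  rcases reachable_or_of_forall_reachable_or le_sup_left le_sup_left le_sup_left
    (hadj hxw) (hadj hwz) ((hzy.mono le_sup_left).trans (hadj hxy).symm) hD u v with h | h | h
  · exact hH hxw (by simp) h
  · exact hH hwz (by simp) h
  · exact hH hxy (by simp) h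

lemma rc_one_le_of_isTree_le [Fintype V] (hV : 2 ≤ Fintype.card V) {T : SimpleGraph V}
    (hTG : T ≤ G) (hT : T.IsTree) : rc G 1 ≤ (Fintype.card V - 1 : ℕ) := by
  classical
  have hcard : T.edgeFinset.card = Fintype.card V - 1 := by
    have := hT.card_edgeFinset
    omega
  obtain ⟨f, hf, hlt⟩ := T.edgeFinset.exists_injOn_lt_card (Finset.card_pos.mp (by omega))
  refine rc_le_of_forall_lt (fun e => hcard ▸ hlt e)
    (rainbowKConnectedColoring_one_of_forall_exists_injOn fun u v =>
      ⟨T, hTG, by simpa using hf, hT.connected.preconnected u v⟩)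

lemma card_sub_one_le_rc_one_of_isTree [Fintype V] (hG : G.IsTree) :
    ((Fintype.card V - 1 : ℕ) : ℕ∞) ≤ rc G 1 := by
  classical
  refine le_sInf ?_
  rintro _ ⟨m, rfl, χ, hχ, h⟩
  have hinj : InjOn χ G.edgeFinset := by simpa using h.injOn_edgeSet hG.isAcyclic
  have hle : G.edgeFinset.card ≤ m := by
    simpa using Finset.card_le_card_of_injOn χ (fun e _ => Finset.mem_range.mpr (hχ e)) hinj
  have := hG.card_edgeFinset
  exact_mod_cast (by omega : Fintype.card V - 1 ≤ m)

lemma rc_one_le_card_sub_two_of_not_isTree [Fintype V] {T : SimpleGraph V} (hTG : T ≤ G)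
    (hT : T.IsTree) (hG : ¬G.IsTree) : rc G 1 ≤ (Fintype.card V - 2 : ℕ) := by
  classical
  obtain ⟨x, y, hxy, hTxy⟩ : ∃ x y, G.Adj x y ∧ ¬T.Adj x y := by
    by_contra! h
    exact hG (le_antisymm h hTG ▸ hT)
  obtain ⟨w, z, hxw, hwz, hxz, hzy⟩ :=
    Reachable.exists_adj_adj_reachable_deleteEdges (hT.connected.preconnected x y) hxy.ne hTxy
  set D := T.deleteEdges {s(x, w), s(w, z)}
  set S := T.edgeFinset.erase s(w, z)
  have hScard : S.card = Fintype.card V - 2 := by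
    have := hT.card_edgeFinset
    rw [Finset.card_erase_of_mem (mem_edgeFinset.mpr hwz)]
    omega
  have hxwS : s(x, w) ∈ S := Finset.mem_erase.mpr ⟨by simp [hxz, hxw.ne], mem_edgeFinset.mpr hxw⟩
  have hDS : D.edgeSet ⊆ ↑S \ {s(x, w)} := by
    intro d hd
    simp only [D, edgeSet_deleteEdges, Set.mem_sdiff, mem_insert_iff, mem_singleton_iff,
      not_or] at hd
    exact ⟨Finset.mem_erase.mpr ⟨hd.2.2, mem_edgeFinset.mpr hd.1⟩, hd.2.1⟩
  obtain ⟨χ, hlt, hχ⟩ := S.exists_lt_card_injOn_insert_sdiff hxwS {s(x, w), s(w, z), s(x, y)} <| by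
    refine Set.disjoint_left.mpr ?_
    rintro e (rfl | rfl | rfl) ⟨he, hne⟩
    · exact hne rfl
    · exact Finset.notMem_erase _ _ he
    · exact hTxy (mem_edgeFinset.mp (Finset.mem_of_mem_erase he))
  refine rc_le_of_forall_lt (fun e => hScard ▸ hlt e) <|
    rainbowKConnectedColoring_one_of_three_edges ((deleteEdges_le _).trans hTG) (hTG hxw)
      (hTG hwz) hxy hzy (hT.connected.reachable_deleteEdges_pair x w z)
      fun e he => (hχ e he).mono (insert_subset_insert hDS)

end

/-- For every connected graph `G` on `n ≥ 2` vertices, `rc₁(G) ≤ n - 1`,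
with equality iff `G` is a tree. -/
theorem rc_one_le_card_sub_one {V : Type*} [Fintype V] (G : SimpleGraph V)
    (hV : 2 ≤ Fintype.card V) (hG : G.Connected) :
    rc G 1 ≤ (Fintype.card V : ℕ∞) - 1 ∧
      (rc G 1 = (Fintype.card V : ℕ∞) - 1 ↔ G.IsTree) := by
  obtain ⟨T, hTG, hT⟩ := hG.exists_isTree_le
  have hcast : (Fintype.card V : ℕ∞) - 1 = (Fintype.card V - 1 : ℕ) := by simp
  have hupper := rc_one_le_of_isTree_le hV hTG hT
  rw [hcast]
  refine ⟨hupper, fun h => ?_, fun hG' => hupper.antisymm (card_sub_one_le_rc_one_of_isTree hG')⟩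
  by_contra hG'
  have := h ▸ rc_one_le_card_sub_two_of_not_isTree hTG hT hG'
  norm_cast at this
  omega

end RainbowFormal
end
end
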